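/- arXiv:1707.03081 — 8 statements merged into one kernel-verified Lean document; each statement's English description precedes it below -/
import Mathlib

section
/- Let X be a real Hilbert space, let C₁,…,C_m ⊆ X be nonempty closed convex sets with nonempty intersection C = C₁ ∩ ⋯ ∩ C_m, and let d ∈ X satisfy P_C(d) = 0. Then inf_{y ∈ Xᵐ} v(y) = 0. (Theorem 3.1(2): zero duality gap for the best approximation problem.) -/
open scoped RealInnerProductSpace Pointwise

/-!
Let `K ⊆ X × ℝ` be the cone of pairs `(∑ yᵢ, ∑ sᵢ)` with `δ*(yᵢ, Cᵢ) ≤ sᵢ`. If the dual value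
stayed `≥ ε > 0`, the point `(d, ε)` would lie outside the open convex set
`K + {(u, t) | ½‖u‖² < t}`. Since that set contains points `(d, t)` above `(d, ε)`, a separating
hyperplane is non-vertical, and it yields `p` with `⟪p, w⟫ ≤ σ` on `K` and `½‖p‖² + ε ≤ ⟪p, d⟫`.
The first property puts `p` in every closed convex `Cᵢ`, and then the second contradicts
`‖d‖ ≤ ‖d - p‖`, i.e. `P_C d = 0`.
-/

/-- The support function `δ*(z, D) = sup_{x ∈ D} ⟪z, x⟫`, with values in `EReal`. -/
noncomputable def suppFn {X : Type*} [NormedAddCommGroup X] [InnerProductSpace ℝ X]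
    (z : X) (D : Set X) : EReal :=
  ⨆ x ∈ D, ((⟪z, x⟫ : ℝ) : EReal)

@[norm_cast]
theorem EReal.coe_finsetSum {ι : Type*} (t : Finset ι) (s : ι → ℝ) :
    ((∑ i ∈ t, s i : ℝ) : EReal) = ∑ i ∈ t, (s i : EReal) :=
  map_sum (⟨⟨(↑), EReal.coe_zero⟩, EReal.coe_add⟩ : ℝ →+ EReal) s t

theorem nonpos_of_forall_pos_mul_lt {a c : ℝ} (h : ∀ r > 0, r * a < c) : a ≤ 0 := by
  by_contra! ha
  have := h ((|c| + 1) / a) (by positivity)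
  rw [div_mul_cancel₀ _ ha.ne'] at this
  linarith [le_abs_self c]

section Hilbert

variable {X : Type*} [NormedAddCommGroup X] [InnerProductSpace ℝ X]

theorem suppFn_le_coe {z : X} {D : Set X} {s : ℝ} (h : ∀ x ∈ D, ⟪z, x⟫ ≤ s) :
    suppFn z D ≤ s :=
  iSup₂_le fun x hx => EReal.coe_le_coe_iff.2 (h x hx)

theorem suppFn_nonneg (z : X) {D : Set X} (h0 : (0 : X) ∈ D) : 0 ≤ suppFn z D :=
  le_iSup₂_of_le (f := fun x (_ : x ∈ D) => ((⟪z, x⟫ : ℝ) : EReal)) 0 h0 (by simp)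

theorem Convex.mem_of_forall_inner_le [CompleteSpace X] {D : Set X} (hconv : Convex ℝ D)
    (hclosed : IsClosed D) {p : X} (h : ∀ y s, (∀ x ∈ D, ⟪y, x⟫ ≤ s) → ⟪y, p⟫ ≤ s) : p ∈ D := by
  by_contra hp
  obtain ⟨f, u, hfD, hfp⟩ := geometric_hahn_banach_closed_point hconv hclosed hp
  have := h ((InnerProductSpace.toDual ℝ X).symm f) u fun x hx => by
    rw [InnerProductSpace.toDual_symm_apply]; exact (hfD x hx).le
  rw [InnerProductSpace.toDual_symm_apply] at this
  linarith

def supportEpigraphSum {ι : Type*} [Fintype ι] (C : ι → Set X) : ConvexCone ℝ (X × ℝ) where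
  carrier := {q | ∃ (y : ι → X) (s : ι → ℝ), (∀ i, ∀ x ∈ C i, ⟪y i, x⟫ ≤ s i) ∧
    (∑ i, y i, ∑ i, s i) = q}
  smul_mem' := by
    rintro c hc _ ⟨y, s, hys, rfl⟩
    refine ⟨c • y, c • s, fun i x hx => ?_, by simp [Finset.smul_sum, Finset.mul_sum]⟩
    simpa [real_inner_smul_left] using mul_le_mul_of_nonneg_left (hys i x hx) hc.le
  add_mem' := by
    rintro _ ⟨y, s, hys, rfl⟩ _ ⟨y', s', hys', rfl⟩
    refine ⟨y + y', s + s', fun i x hx => ?_, by simp [Finset.sum_add_distrib]⟩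
    simpa [inner_add_left] using add_le_add (hys i x hx) (hys' i x hx)

section supportEpigraphSum

variable {ι : Type*} [Fintype ι] {C : ι → Set X}

theorem pointed_supportEpigraphSum : (supportEpigraphSum C).Pointed :=
  ⟨0, 0, by simp, by simp⟩

theorem mem_supportEpigraphSum_of_le [DecidableEq ι] {j : ι} {y : X} {s : ℝ}
    (h : ∀ x ∈ C j, ⟪y, x⟫ ≤ s) : (y, s) ∈ supportEpigraphSum C := by
  refine ⟨Pi.single j y, Pi.single j s, fun i x hx => ?_, by simp⟩
  by_cases hij : i = j
  · subst hij; simpa using h x hx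
  · simp [hij]

end supportEpigraphSum

theorem exists_inner_sub_lt_of_notMem [CompleteSpace X] {E : Set (X × ℝ)} (hconv : Convex ℝ E)
    (hopen : IsOpen E) {x : X} {s t : ℝ} (hst : s < t) (ht : (x, t) ∈ E) (hs : (x, s) ∉ E) :
    ∃ p : X, ∀ e ∈ E, ⟪p, e.1⟫ - e.2 < ⟪p, x⟫ - s := by
  obtain ⟨f, hf⟩ := geometric_hahn_banach_open_point hconv hopen hs
  set p₀ := (InnerProductSpace.toDual ℝ X).symm (f.comp (.inl ℝ X ℝ))
  set β := f (0, 1)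
  have hf_apply (z : X) (r : ℝ) : f (z, r) = ⟪p₀, z⟫ + r * β := by
    have : ((z, r) : X × ℝ) = (z, 0) + r • (0, 1) := by simp
    rw [this, map_add, map_smul, InnerProductSpace.toDual_symm_apply, smul_eq_mul]
    rfl
  have hβ : β < 0 := by
    have := hf _ ht
    rw [hf_apply, hf_apply] at this
    exact neg_of_mul_neg_right (by linarith) (sub_pos.2 hst).le
  have hg (z : X) (r : ℝ) : -β * (⟪(-β)⁻¹ • p₀, z⟫ - r) = f (z, r) := by
    rw [hf_apply, real_inner_smul_left, mul_sub, ← mul_assoc,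
      mul_inv_cancel₀ (neg_ne_zero.2 hβ.ne), one_mul]
    ring
  refine ⟨(-β)⁻¹ • p₀, fun e he => ?_⟩
  rw [← mul_lt_mul_iff_right₀ (neg_pos.2 hβ), hg, hg]
  exact hf e he

theorem ConvexCone.exists_inner_le_of_le_half_norm_sq_add [CompleteSpace X]
    (K : ConvexCone ℝ (X × ℝ)) (hK : K.Pointed) {d : X} {ε : ℝ}
    (h : ∀ q ∈ K, ε ≤ 1 / 2 * ‖d - q.1‖ ^ 2 + q.2) :
    ∃ p : X, (∀ q ∈ K, ⟪p, q.1⟫ ≤ q.2) ∧ 1 / 2 * ‖p‖ ^ 2 + ε ≤ ⟪p, d⟫ := by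
  set E : Set (X × ℝ) := (K : Set (X × ℝ)) + {e : X × ℝ | 1 / 2 * ‖e.1‖ ^ 2 < e.2}
  have hopen : IsOpen E := IsOpen.add_left (isOpen_lt (by fun_prop) continuous_snd)
  have hconv : Convex ℝ E := K.convex.add <| by
    simpa using ((convexOn_univ_norm.pow (fun x _ => norm_nonneg x) 2).smul
      (by norm_num : (0 : ℝ) ≤ 1 / 2)).convex_strict_epigraph
  have mem_E {q : X × ℝ} (hq : q ∈ K) {z : X} {t : ℝ} (hzt : 1 / 2 * ‖z‖ ^ 2 < t) :
      q + (z, t) ∈ E :=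
    Set.add_mem_add hq hzt
  have hdE : (d, ε) ∉ E := by
    rintro ⟨q, hq, e, he, hqe⟩
    obtain ⟨rfl, rfl⟩ := Prod.ext_iff.1 hqe
    have := h q hq
    simp only [Prod.fst_add, Prod.snd_add, add_sub_cancel_left] at this
    have he' : 1 / 2 * ‖e.1‖ ^ 2 < e.2 := he
    linarith
  obtain ⟨p, hp⟩ := exists_inner_sub_lt_of_notMem hconv hopen
    ((le_max_left ε _).trans_lt (lt_add_one _))
    (by simpa using mem_E hK ((le_max_right ε (1 / 2 * ‖d‖ ^ 2)).trans_lt (lt_add_one _)))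
    hdE
  refine ⟨p, fun q hq => ?_, le_of_forall_pos_lt_add fun η hη => ?_⟩
  · -- every `q ∈ K` is a recession direction of `E`
    have hrec := fun r (hr : 0 < r) => hp _ (mem_E (K.smul_mem hr hq) (z := 0) (t := 1) (by simp))
    simp only [Prod.fst_add, Prod.snd_add, Prod.smul_fst, Prod.smul_snd, add_zero,
      real_inner_smul_right, smul_eq_mul] at hrec
    have := nonpos_of_forall_pos_mul_lt (a := ⟪p, q.1⟫ - q.2) (c := ⟪p, d⟫ - ε + 1)
      fun r hr => by linarith [hrec r hr]
    linarith
  · have := hp _ (mem_E hK (lt_add_of_pos_right (1 / 2 * ‖p‖ ^ 2) hη))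
    simp only [zero_add, real_inner_self_eq_norm_sq] at this
    linarith

theorem exists_mem_supportEpigraphSum_lt [CompleteSpace X] {ι : Type*} [Fintype ι]
    {C : ι → Set X} (hCcl : ∀ i, IsClosed (C i)) (hCcv : ∀ i, Convex ℝ (C i)) {d : X}
    (hproj : ∀ x ∈ ⋂ i, C i, ‖d‖ ≤ ‖d - x‖) {ε : ℝ} (hε : 0 < ε) :
    ∃ q ∈ supportEpigraphSum C, 1 / 2 * ‖d - q.1‖ ^ 2 + q.2 < ε := by
  classical
  by_contra! h
  obtain ⟨p, hpK, hpd⟩ :=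
    (supportEpigraphSum C).exists_inner_le_of_le_half_norm_sq_add pointed_supportEpigraphSum h
  have hpC : p ∈ ⋂ i, C i := Set.mem_iInter.2 fun j =>
    (hCcv j).mem_of_forall_inner_le (hCcl j) fun y s hys => by
      simpa [real_inner_comm] using hpK _ (mem_supportEpigraphSum_of_le hys)
  have hdp : ‖d‖ ^ 2 ≤ ‖d - p‖ ^ 2 := by gcongr; exact hproj p hpC
  rw [norm_sub_sq_real, real_inner_comm] at hdp
  nlinarith [norm_nonneg p]

end Hilbert

theorem zero_duality_gap_BAP_general {X : Type*} [NormedAddCommGroup X] [InnerProductSpace ℝ X]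
    [CompleteSpace X] {m : ℕ} (C : Fin m → Set X) (d : X)
    (hCcl : ∀ i, IsClosed (C i)) (hCcv : ∀ i, Convex ℝ (C i))
    (hmem : (0 : X) ∈ ⋂ i, C i)
    (hproj : ∀ x ∈ ⋂ i, C i, ‖d - (0 : X)‖ ≤ ‖d - x‖) :
    ⨅ y : Fin m → X,
      (((1 / 2 * ‖d - ∑ i, y i‖ ^ 2 : ℝ) : EReal) + ∑ i, suppFn (y i) (C i)) = (0 : EReal) := by
  refine le_antisymm (EReal.le_of_forall_lt_iff_le.1 fun ε hε => ?_) (le_iInf fun y => ?_)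
  · obtain ⟨_, ⟨y, s, hys, rfl⟩, hlt⟩ := exists_mem_supportEpigraphSum_lt hCcl hCcv
      (fun x hx => by simpa using hproj x hx) (EReal.coe_pos.1 hε)
    calc _ ≤ ((1 / 2 * ‖d - ∑ i, y i‖ ^ 2 : ℝ) : EReal) + ∑ i, suppFn (y i) (C i) := iInf_le _ y
      _ ≤ ((1 / 2 * ‖d - ∑ i, y i‖ ^ 2 : ℝ) : EReal) + ∑ i, (s i : EReal) := by
        gcongr with i; exact suppFn_le_coe (hys i)
      _ ≤ ε := by exact_mod_cast hlt.le
  · exact add_nonneg (EReal.coe_nonneg.2 (by positivity))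
      (Finset.sum_nonneg fun i _ => suppFn_nonneg _ (Set.mem_iInter.1 hmem i))

/-- Theorem 3.1(2): zero duality gap for the best approximation problem. -/
theorem zero_duality_gap_BAP {X : Type*} [NormedAddCommGroup X] [InnerProductSpace ℝ X]
    [CompleteSpace X] {m : ℕ} (C : Fin m → Set X) (d : X)
    (hCne : ∀ i, (C i).Nonempty) (hCcl : ∀ i, IsClosed (C i)) (hCcv : ∀ i, Convex ℝ (C i))
    (hmem : (0 : X) ∈ ⋂ i, C i)
    (hproj : ∀ x ∈ ⋂ i, C i, ‖d - (0 : X)‖ ≤ ‖d - x‖) :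
    ⨅ y : Fin m → X,
      (((1 / 2 * ‖d - ∑ i, y i‖ ^ 2 : ℝ) : EReal) + ∑ i, suppFn (y i) (C i)) = (0 : EReal) :=
  zero_duality_gap_BAP_general C d hCcl hCcv hmem hproj
end

section
/- Let A ∈ ℝ^{m×n} be a matrix all of whose columns A₁,…,A_n are nonzero, let b ∈ ℝᵐ and λ > 0. For each i ∈ {1,…,n}, let S_i = {z ∈ ℝᵐ : |⟨A_i, z⟩| ≤ λ}. Then the least squares lasso problem and the dual-form problem have equal optimal values: inf_{x ∈ ℝⁿ} ( ½‖Ax − b‖² + λ‖x‖₁ ) = inf_{(y₁,…,y_n) ∈ (ℝᵐ)ⁿ} ( ½‖b − Σ_{i=1}^n y_i‖² + Σ_{i=1}^n δ*(y_i, S_i) ). (Equivalence of problems (2.2a) and (2.2c) in Section 2.) -/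
/-!
Every term of the dual objective is a support function of a slab `{z | |⟪a, z⟫| ≤ λ}` with
`a ≠ 0`. Such a slab contains the line `ℝ ∙ w` for every `w ⟂ a`, so its support function is `+∞`
at every `y ∉ ℝ ∙ a` (as `(ℝ ∙ a)ᗮᗮ = ℝ ∙ a`), while at `y = c • a` it equals `λ |c|`.
Hence only the points `y_i = x_i • A_i` give finite dual values, and there the dual objective is
the lasso objective at `x`.
-/

open scoped RealInnerProductSpace

theorem EReal.coe_finset_sum {ι : Type*} (s : Finset ι) (f : ι → ℝ) :
    ((∑ i ∈ s, f i : ℝ) : EReal) = ∑ i ∈ s, (f i : EReal) :=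
  map_sum (⟨⟨Real.toEReal, EReal.coe_zero⟩, EReal.coe_add⟩ : ℝ →+ EReal) f s

section Slab

variable {E : Type*} [NormedAddCommGroup E] [InnerProductSpace ℝ E]

theorem suppFn_nonneg_of_zero_mem {D : Set E} (hD : (0 : E) ∈ D) (y : E) :
    0 ≤ suppFn y D :=
  le_iSup₂_of_le (f := fun x (_ : x ∈ D) => ((⟪y, x⟫ : ℝ) : EReal)) 0 hD (by simp)

theorem suppFn_slab_smul {a : E} (ha : a ≠ 0) {lam : ℝ} (hlam : 0 ≤ lam) (c : ℝ) :
    suppFn (c • a) {z | |⟪a, z⟫| ≤ lam} = ((lam * |c| : ℝ) : EReal) := by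
  apply le_antisymm
  · refine iSup₂_le fun z hz => EReal.coe_le_coe_iff.mpr ?_
    calc ⟪c • a, z⟫ = c * ⟪a, z⟫ := real_inner_smul_left _ _ _
      _ ≤ |c| * |⟪a, z⟫| := (le_abs_self _).trans (abs_mul _ _).le
      _ ≤ lam * |c| := by rw [mul_comm lam]; exact mul_le_mul_of_nonneg_left hz (abs_nonneg c)
  · have hnorm : ‖a‖ ^ 2 ≠ 0 := by positivity
    set z : E := (SignType.sign c * lam / ‖a‖ ^ 2 : ℝ) • a
    have hinner : ⟪a, z⟫ = SignType.sign c * lam := by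
      rw [real_inner_smul_right, real_inner_self_eq_norm_sq]
      field_simp
    have hz : |⟪a, z⟫| ≤ lam := by
      rw [hinner, abs_mul, abs_of_nonneg hlam]
      refine mul_le_of_le_one_left hlam ?_
      rcases lt_trichotomy c 0 with hc | rfl | hc <;> simp [*]
    refine le_iSup₂_of_le (f := fun x _ => ((⟪c • a, x⟫ : ℝ) : EReal)) z hz
      (EReal.coe_le_coe_iff.mpr (le_of_eq ?_))
    rw [real_inner_smul_left, hinner, ← mul_assoc, self_mul_sign, mul_comm]

theorem suppFn_slab_eq_top_of_inner_ne_zero {a y w : E} {lam : ℝ} (hlam : 0 ≤ lam)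
    (haw : ⟪a, w⟫ = 0) (hyw : ⟪y, w⟫ ≠ 0) :
    suppFn y {z | |⟪a, z⟫| ≤ lam} = ⊤ := by
  refine EReal.eq_top_iff_forall_lt _ |>.mpr fun r => ?_
  set z : E := ((r + 1) / ⟪y, w⟫) • w
  have hz : |⟪a, z⟫| ≤ lam := by simpa [z, real_inner_smul_right, haw] using hlam
  have hyz : ⟪y, z⟫ = r + 1 := by
    simp only [z, real_inner_smul_right]
    field_simp
  refine lt_of_lt_of_le ?_ (le_iSup₂_of_le z hz le_rfl)
  exact EReal.coe_lt_coe_iff.mpr (hyz ▸ lt_add_one r)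

theorem suppFn_slab_eq_top {a y : E} {lam : ℝ} (hlam : 0 ≤ lam) (hy : ∀ c : ℝ, c • a ≠ y) :
    suppFn y {z | |⟪a, z⟫| ≤ lam} = ⊤ := by
  have hy' : y ∉ (ℝ ∙ a)ᗮᗮ := by
    rwa [Submodule.orthogonal_orthogonal, Submodule.mem_span_singleton, not_exists]
  rw [Submodule.mem_orthogonal] at hy'
  push Not at hy'
  obtain ⟨w, hw, hwy⟩ := hy'
  rw [Submodule.mem_orthogonal_singleton_iff_inner_right] at hw
  exact suppFn_slab_eq_top_of_inner_ne_zero hlam hw (by rwa [real_inner_comm])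

end Slab

section Lasso

variable {ι E : Type*} [Fintype ι] [NormedAddCommGroup E] [InnerProductSpace ℝ E]

theorem sum_suppFn_slab_smul {A : ι → E} (hA : ∀ i, A i ≠ 0) {lam : ℝ} (hlam : 0 ≤ lam)
    (x : ι → ℝ) :
    ∑ i, suppFn (x i • A i) {z | |⟪A i, z⟫| ≤ lam} = ((lam * ∑ i, |x i| : ℝ) : EReal) := by
  simp only [suppFn_slab_smul (hA _) hlam, Finset.mul_sum, EReal.coe_finset_sum]

theorem sum_suppFn_slab_eq_top {A : ι → E} {lam : ℝ} (hlam : 0 ≤ lam) {y : ι → E}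
    (hy : ¬∀ i, ∃ c : ℝ, c • A i = y i) :
    ∑ i, suppFn (y i) {z | |⟪A i, z⟫| ≤ lam} = ⊤ := by
  push Not at hy
  obtain ⟨i, hi⟩ := hy
  refine top_le_iff.mp ?_
  calc ⊤ = suppFn (y i) {z | |⟪A i, z⟫| ≤ lam} := (suppFn_slab_eq_top hlam hi).symm
    _ ≤ ∑ j, suppFn (y j) {z | |⟪A j, z⟫| ≤ lam} :=
      Finset.single_le_sum (f := fun j => suppFn (y j) {z | |⟪A j, z⟫| ≤ lam})
        (fun j _ => suppFn_nonneg_of_zero_mem (by simpa using hlam) (y j)) (Finset.mem_univ i)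

end Lasso

/-- Section 2: the least squares lasso problem has the same optimal value as the
dual-form best approximation problem over the slabs `S_i = {z : |⟪A_i, z⟫| ≤ λ}`.
Here `A i` denotes the `i`-th column of the matrix `A`, all assumed nonzero, and
`A x = ∑ i, x i • A i`. -/
theorem lasso_eq_dual_BAP {m n : ℕ} (A : Fin n → EuclideanSpace ℝ (Fin m))
    (hA : ∀ i, A i ≠ 0) (b : EuclideanSpace ℝ (Fin m)) (lam : ℝ) (hlam : 0 < lam) :
    (⨅ x : Fin n → ℝ,
      ((1 / 2 * ‖(∑ i, x i • A i) - b‖ ^ 2 + lam * ∑ i, |x i| : ℝ) : EReal)) =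
    ⨅ y : Fin n → EuclideanSpace ℝ (Fin m),
      (((1 / 2 * ‖b - ∑ i, y i‖ ^ 2 : ℝ) : EReal) +
        ∑ i, suppFn (y i) {z : EuclideanSpace ℝ (Fin m) | |⟪A i, z⟫| ≤ lam}) := by
  have dual_at_smul (x : Fin n → ℝ) :
      ((1 / 2 * ‖b - ∑ i, x i • A i‖ ^ 2 : ℝ) : EReal) +
        ∑ i, suppFn (x i • A i) {z : EuclideanSpace ℝ (Fin m) | |⟪A i, z⟫| ≤ lam} =
      ((1 / 2 * ‖(∑ i, x i • A i) - b‖ ^ 2 + lam * ∑ i, |x i| : ℝ) : EReal) := by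
    rw [sum_suppFn_slab_smul hA hlam.le, ← EReal.coe_add, norm_sub_rev]
  apply le_antisymm
  · refine le_iInf fun y => ?_
    by_cases hy : ∀ i, ∃ c : ℝ, c • A i = y i
    · choose x hx using hy
      obtain rfl : (fun i => x i • A i) = y := funext hx
      exact iInf_le_of_le x (dual_at_smul x).ge
    · rw [sum_suppFn_slab_eq_top hlam.le hy, EReal.coe_add_top]
      exact le_top
  · exact le_iInf fun x => iInf_le_of_le (fun i => x i • A i) (dual_at_smul x).le
end

section
/- Let X be a real Hilbert space, let d ∈ X, and let (f_j)_{j ∈ J} be a finite family of vectors in X. Then there exists ε̂ > 0, depending only on d and the family (f_j)_{j ∈ J}, with the following property: for every choice of nonnegative scalars (λ_j)_{j ∈ J}, setting T = {j ∈ J : λ_j > 0}, L = span{f_j : j ∈ T} and x = d − Σ_{j ∈ J} λ_j f_j, if ‖x‖ < ε̂ then d ∈ L and x ∈ L; furthermore, if in addition d ≠ 0 then T ≠ ∅. (Lemma 5.2, adapted from Deutsch–Hundal.) -/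
open scoped RealInnerProductSpace

/-- Lemma 5.2 (adapted from Deutsch–Hundal): there is an `ε̂ > 0`, depending only on
`d` and the finite family `(f j)`, such that for any nonnegative coefficients `λ`,
if `x = d − ∑ j λ_j f_j` satisfies `‖x‖ < ε̂`, then both `d` and `x` lie in the span
`L` of the vectors `f j` with `λ j > 0`; furthermore if `d ≠ 0` then that index set
is nonempty. -/
theorem small_residual_in_span {X : Type*} [NormedAddCommGroup X]
    [InnerProductSpace ℝ X] [CompleteSpace X] {J : Type*} [Fintype J]
    (d : X) (f : J → X) :
    ∃ ε > (0 : ℝ), ∀ lam : J → ℝ, (∀ j, 0 ≤ lam j) →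
      ‖d - ∑ j, lam j • f j‖ < ε →
      d ∈ Submodule.span ℝ (f '' {j | 0 < lam j}) ∧
      (d - ∑ j, lam j • f j) ∈ Submodule.span ℝ (f '' {j | 0 < lam j}) ∧
      (d ≠ 0 → {j | 0 < lam j}.Nonempty) := by
  classical
  set g : Finset J → ℝ := fun s =>
    if d ∈ Submodule.span ℝ (f '' (s : Set J)) then 1
    else Metric.infDist d (Submodule.span ℝ (f '' (s : Set J))) with hg
  have hgpos : ∀ s, 0 < g s := by
    intro s
    by_cases h : d ∈ Submodule.span ℝ (f '' (s : Set J))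
    · simp [hg, h]
    · simp only [hg, if_neg h]
      have hfd : FiniteDimensional ℝ (Submodule.span ℝ (f '' (s : Set J))) :=
        FiniteDimensional.span_of_finite ℝ (s.finite_toSet.image f)
      have hclosed : IsClosed ((Submodule.span ℝ (f '' (s : Set J)) : Submodule ℝ X) : Set X) :=
        Submodule.closed_of_finiteDimensional _
      exact (hclosed.notMem_iff_infDist_pos
        ⟨0, Submodule.zero_mem _⟩).mp h
  have hne : (Finset.univ : Finset (Finset J)).Nonempty := ⟨∅, Finset.mem_univ _⟩
  refine ⟨Finset.univ.inf' hne g, ?_, ?_⟩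
  · rw [gt_iff_lt, Finset.lt_inf'_iff]
    exact fun s _ => hgpos s
  · intro lam hlam hx
    set T : Finset J := Finset.univ.filter (fun j => 0 < lam j) with hT
    have hTset : (T : Set J) = {j | 0 < lam j} := by
      ext j; simp [hT]
    have hsum : (∑ j, lam j • f j) ∈ Submodule.span ℝ (f '' {j | 0 < lam j}) := by
      apply Submodule.sum_mem
      intro j _
      by_cases h : 0 < lam j
      · exact Submodule.smul_mem _ _ (Submodule.subset_span ⟨j, h, rfl⟩)
      · have : lam j = 0 := le_antisymm (not_lt.mp h) (hlam j)
        simp [this]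
    have hεT : Finset.univ.inf' hne g ≤ g T := Finset.inf'_le _ (Finset.mem_univ T)
    have hdL : d ∈ Submodule.span ℝ (f '' {j | 0 < lam j}) := by
      by_contra h
      have hgT : g T = Metric.infDist d (Submodule.span ℝ (f '' {j | 0 < lam j})) := by
        rw [hg]; simp only [hTset]; rw [if_neg h]
      have hle : Metric.infDist d (Submodule.span ℝ (f '' {j | 0 < lam j}))
          ≤ ‖d - ∑ j, lam j • f j‖ := by
        have := Metric.infDist_le_dist_of_mem (x := d) hsum
        rwa [dist_eq_norm] at this
      linarith
    refine ⟨hdL, Submodule.sub_mem _ hdL hsum, ?_⟩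
    intro hd0
    by_contra hempty
    have he : {j | 0 < lam j} = ∅ := Set.not_nonempty_iff_eq_empty.mp hempty
    rw [he] at hdL
    simp only [Set.image_empty, Submodule.span_empty, Submodule.mem_bot] at hdL
    exact hd0 hdL
end

section
/- Let X be a real Hilbert space, let Q be a finite index set, let (P_i)_{i ∈ Q} be nonempty closed convex subsets of X, and let a ∈ X. Define F : X^Q → ℝ ∪ {+∞} by F(y) = ½‖a − Σ_{i ∈ Q} y_i‖² + Σ_{i ∈ Q} δ*(y_i, P_i). If ỹ ∈ X^Q is a minimizer of F with F(ỹ) < +∞, then for every y ∈ X^Q one has F(ỹ) ≤ F(y) − ½‖Σ_{i ∈ Q}(y_i − ỹ_i)‖². (Block strong-convexity decrease estimate underlying inequality (5.5) of Proposition 5.3, used for the SHQP step.) -/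
open scoped RealInnerProductSpace

/-- The block objective `F(y) = ½‖a − ∑ i y i‖² + ∑ i δ*(y i, P i)`. -/
noncomputable def Fobj {X : Type*} [NormedAddCommGroup X] [InnerProductSpace ℝ X]
    {Q : Type*} [Fintype Q] (P : Q → Set X) (a : X) (y : Q → X) : EReal :=
  ((1 / 2 * ‖a - ∑ i, y i‖ ^ 2 : ℝ) : EReal) + ∑ i, suppFn (y i) (P i)

/-!
The quadratic part of `F` is a `1`-strongly convex function of `∑ i, y i`, and each support
function is sublinear. Hence along the segment from the minimizer `ỹ` to `y`,
`F(ỹ) ≤ F((1 - l) ỹ + l y) ≤ (1 - l) F(ỹ) + l F(y) - l (1 - l) ½‖∑ i (y i - ỹ i)‖²`;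
dividing by `l` and letting `l → 0⁺` gives the estimate. When `F(y) < ⊤` every support-function
value involved is a real number, so the argument takes place in `ℝ`.
-/

open Filter Set Topology

namespace EReal

theorem coe_finset_sum_s8 {ι : Type*} (s : Finset ι) (f : ι → ℝ) :
    ((∑ i ∈ s, f i : ℝ) : EReal) = ∑ i ∈ s, (f i : EReal) :=
  map_sum (⟨⟨(↑), coe_zero⟩, coe_add⟩ : ℝ →+ EReal) f s

variable {ι : Type*} {s : Finset ι} {f : ι → EReal}

theorem finset_sum_ne_bot (h : ∀ i ∈ s, f i ≠ ⊥) : ∑ i ∈ s, f i ≠ ⊥ :=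
  Finset.sum_induction f (· ≠ ⊥) (fun _ _ ha hb => add_ne_bot_iff.2 ⟨ha, hb⟩) zero_ne_bot h

theorem ne_top_of_finset_sum_ne_top (h : ∀ i ∈ s, f i ≠ ⊥) (hsum : ∑ i ∈ s, f i ≠ ⊤) {j : ι}
    (hj : j ∈ s) : f j ≠ ⊤ := by
  classical
  rw [← Finset.add_sum_erase s f hj] at hsum
  have hrest : ∑ i ∈ s.erase j, f i ≠ ⊥ :=
    finset_sum_ne_bot fun i hi => h i (Finset.mem_of_mem_erase hi)
  exact ((add_ne_top_iff_ne_top₂ (h j hj) hrest).1 hsum).1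

end EReal

section SupportFunction

variable {X : Type*} [NormedAddCommGroup X] [InnerProductSpace ℝ X] {D : Set X} {z w : X}

theorem suppFn_le_coe_iff {c : ℝ} : suppFn z D ≤ c ↔ ∀ x ∈ D, ⟪z, x⟫ ≤ c := by
  simp only [suppFn, iSup₂_le_iff, EReal.coe_le_coe_iff]

theorem suppFn_ne_bot (hD : D.Nonempty) : suppFn z D ≠ ⊥ := by
  obtain ⟨x, hx⟩ := hD
  exact ne_bot_of_le_ne_bot (EReal.coe_ne_bot ⟪z, x⟫) (le_iSup₂_of_le x hx le_rfl)

theorem suppFn_smul_add_smul_le {s t α β : ℝ} (hz : suppFn z D ≤ s) (hw : suppFn w D ≤ t)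
    (hα : 0 ≤ α) (hβ : 0 ≤ β) : suppFn (α • z + β • w) D ≤ (α * s + β * t : ℝ) := by
  rw [suppFn_le_coe_iff] at hz hw ⊢
  intro x hx
  rw [inner_add_left, real_inner_smul_left, real_inner_smul_left]
  gcongr
  exacts [hz x hx, hw x hx]

end SupportFunction

theorem strongConvexOn_half_norm_sq {X : Type*} [NormedAddCommGroup X] [InnerProductSpace ℝ X] :
    StrongConvexOn (univ : Set X) 1 fun x => 1 / 2 * ‖x‖ ^ 2 :=
  strongConvexOn_iff_convex.2 (by simpa using convexOn_const (0 : ℝ) convex_univ)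

theorem add_le_of_forall_le_convex_comb {A B c : ℝ}
    (h : ∀ l ∈ Ioo (0 : ℝ) 1, A ≤ (1 - l) * A + l * B - (1 - l) * l * c) : A + c ≤ B := by
  have hdiv : ∀ l ∈ Ioo (0 : ℝ) 1, A + (1 - l) * c ≤ B := fun l hl => by
    refine le_of_mul_le_mul_left ?_ hl.1
    linarith [h l hl]
  have hlim : Tendsto (fun l : ℝ => A + (1 - l) * c) (𝓝[>] 0) (𝓝 (A + c)) := by
    have hcont : Continuous fun l : ℝ => A + (1 - l) * c := by fun_prop
    simpa using (hcont.tendsto 0).mono_left nhdsWithin_le_nhds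
  refine le_of_tendsto hlim ?_
  filter_upwards [Ioo_mem_nhdsGT one_pos] with l hl using hdiv l hl

section BlockObjective

variable {X : Type*} [NormedAddCommGroup X] [InnerProductSpace ℝ X] {Q : Type*} [Fintype Q]
  {P : Q → Set X} {a : X}

theorem Fobj_eq_coe {y : Q → X} {s : Q → ℝ} (hs : ∀ i, suppFn (y i) (P i) = s i) :
    Fobj P a y = (1 / 2 * ‖a - ∑ i, y i‖ ^ 2 + ∑ i, s i : ℝ) := by
  simp only [Fobj, hs, EReal.coe_add, EReal.coe_finset_sum_s8]

theorem exists_suppFn_eq_coe_of_Fobj_ne_top (hne : ∀ i, (P i).Nonempty) {y : Q → X}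
    (hy : Fobj P a y ≠ ⊤) : ∃ s : Q → ℝ, ∀ i, suppFn (y i) (P i) = s i := by
  have hbot : ∀ i ∈ Finset.univ, suppFn (y i) (P i) ≠ ⊥ := fun i _ => suppFn_ne_bot (hne i)
  have hsum : ∑ i, suppFn (y i) (P i) ≠ ⊤ := fun h =>
    hy (by rw [Fobj, h, EReal.add_top_of_ne_bot (EReal.coe_ne_bot _)])
  exact ⟨fun i => (suppFn (y i) (P i)).toReal, fun i => (EReal.coe_toReal
    (EReal.ne_top_of_finset_sum_ne_top hbot hsum (Finset.mem_univ i)) (hbot i (Finset.mem_univ i))).symm⟩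

theorem Fobj_smul_add_smul_le {z y : Q → X} {t s : Q → ℝ} (ht : ∀ i, suppFn (z i) (P i) ≤ t i)
    (hs : ∀ i, suppFn (y i) (P i) ≤ s i) {α β : ℝ} (hα : 0 ≤ α) (hβ : 0 ≤ β) (hαβ : α + β = 1) :
    Fobj P a (α • z + β • y) ≤
      (α * (1 / 2 * ‖a - ∑ i, z i‖ ^ 2 + ∑ i, t i) + β * (1 / 2 * ‖a - ∑ i, y i‖ ^ 2 + ∑ i, s i)
        - α * β * (1 / 2 * ‖∑ i, (y i - z i)‖ ^ 2) : ℝ) := by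
  have hquad := strongConvexOn_half_norm_sq.2 (mem_univ (a - ∑ i, z i))
    (mem_univ (a - ∑ i, y i)) hα hβ hαβ
  have hcomb : α • (a - ∑ i, z i) + β • (a - ∑ i, y i) = a - ∑ i, (α • z + β • y) i := by
    simp only [Pi.add_apply, Pi.smul_apply, Finset.sum_add_distrib, ← Finset.smul_sum]
    linear_combination (norm := module) hαβ • a
  have hdiff : (a - ∑ i, z i) - (a - ∑ i, y i) = ∑ i, (y i - z i) := by
    rw [Finset.sum_sub_distrib]; abel
  rw [hcomb, hdiff, smul_eq_mul, smul_eq_mul] at hquad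
  calc Fobj P a (α • z + β • y)
      ≤ ((1 / 2 * ‖a - ∑ i, (α • z + β • y) i‖ ^ 2 + ∑ i, (α * t i + β * s i) : ℝ) : EReal) := by
        rw [Fobj, EReal.coe_add, EReal.coe_finset_sum_s8]
        gcongr with i
        exact suppFn_smul_add_smul_le (ht i) (hs i) hα hβ
    _ ≤ _ := by
        rw [EReal.coe_le_coe_iff, Finset.sum_add_distrib, ← Finset.mul_sum, ← Finset.mul_sum]
        linarith

end BlockObjective

theorem block_strong_convexity_decrease_general {X : Type*} [NormedAddCommGroup X]
    [InnerProductSpace ℝ X] {Q : Type*} [Fintype Q]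
    (P : Q → Set X) (hne : ∀ i, (P i).Nonempty) (a : X) (ytil : Q → X)
    (hmin : ∀ y : Q → X, Fobj P a ytil ≤ Fobj P a y)
    (hfin : Fobj P a ytil < ⊤) :
    ∀ y : Q → X,
      Fobj P a ytil + ((1 / 2 * ‖∑ i, (y i - ytil i)‖ ^ 2 : ℝ) : EReal) ≤ Fobj P a y := by
  intro y
  rcases eq_or_ne (Fobj P a y) ⊤ with hy | hy
  · rw [hy]; exact le_top
  obtain ⟨t, ht⟩ := exists_suppFn_eq_coe_of_Fobj_ne_top hne hfin.ne
  obtain ⟨s, hs⟩ := exists_suppFn_eq_coe_of_Fobj_ne_top hne hy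
  rw [Fobj_eq_coe ht, Fobj_eq_coe hs, ← EReal.coe_add, EReal.coe_le_coe_iff]
  refine add_le_of_forall_le_convex_comb fun l hl => ?_
  have hseg := (hmin ((1 - l) • ytil + l • y)).trans <| Fobj_smul_add_smul_le
    (fun i => (ht i).le) (fun i => (hs i).le) (sub_nonneg.2 hl.2.le) hl.1.le (sub_add_cancel 1 l)
  rwa [Fobj_eq_coe ht, EReal.coe_le_coe_iff] at hseg

/-- Block strong-convexity decrease estimate (underlying (5.5)): if `ỹ` minimizes
`F` with `F(ỹ) < +∞`, then `F(ỹ) + ½‖∑ i (y i − ỹ i)‖² ≤ F(y)` for all `y`. -/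
theorem block_strong_convexity_decrease {X : Type*} [NormedAddCommGroup X]
    [InnerProductSpace ℝ X] [CompleteSpace X] {Q : Type*} [Fintype Q]
    (P : Q → Set X) (hne : ∀ i, (P i).Nonempty) (hcl : ∀ i, IsClosed (P i))
    (hcv : ∀ i, Convex ℝ (P i)) (a : X) (ytil : Q → X)
    (hmin : ∀ y : Q → X, Fobj P a ytil ≤ Fobj P a y)
    (hfin : Fobj P a ytil < ⊤) :
    ∀ y : Q → X,
      Fobj P a ytil + ((1 / 2 * ‖∑ i, (y i - ytil i)‖ ^ 2 : ℝ) : EReal) ≤ Fobj P a y :=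
  block_strong_convexity_decrease_general P hne a ytil hmin hfin
end

section
/- Let X be a real Hilbert space and let (f_j)_{j ∈ J} be a finite nonempty family of unit vectors in X. For each j let H_j = {x ∈ X : ⟨f_j, x⟩ = 0}, and let N = ∩_{j ∈ J} H_j. Then there exists a constant μ̄ > 0 such that for all x ∈ X, max_{j ∈ J} dist(x, H_j) ≥ μ̄ · dist(x, N). (Lemma 5.5: linear regularity for a finite system of hyperplanes through the origin.) -/
/-!
The hyperplanes `H_j` are the kernels of the functionals `⟪f j, ·⟫`, so `N` is the kernel of
the finite-rank operator `A x = (⟪f j, x⟫)_j`, and `‖A x‖ = max_j |⟪f j, x⟫| ≤ max_j dist(x, H_j)`.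
The operator `A` descends to an injective map on the finite-dimensional quotient `X ⧸ N`, which
is therefore antilipschitz; since the quotient norm of `x` is `dist(x, N)`, this gives
`dist(x, N) ≤ C ‖A x‖`.
-/

open scoped RealInnerProductSpace
open Metric

theorem ContinuousLinearMap.exists_infDist_ker_le_mul_norm {𝕜 E F : Type*}
    [NontriviallyNormedField 𝕜] [CompleteSpace 𝕜] [NormedAddCommGroup E] [NormedSpace 𝕜 E]
    [NormedAddCommGroup F] [NormedSpace 𝕜 F] (A : E →L[𝕜] F)
    [FiniteDimensional 𝕜 (LinearMap.range (A : E →ₗ[𝕜] F))] :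
    ∃ C > (0 : ℝ), ∀ x, infDist x (LinearMap.ker (A : E →ₗ[𝕜] F) : Set E) ≤ C * ‖A x‖ := by
  set K := LinearMap.ker (A : E →ₗ[𝕜] F)
  have : IsClosed (K : Set E) := A.isClosed_ker
  have : FiniteDimensional 𝕜 (E ⧸ K) :=
    (LinearMap.quotKerEquivRange (A : E →ₗ[𝕜] F)).symm.finiteDimensional
  obtain ⟨C, hC, hA⟩ := (K.liftQ (A : E →ₗ[𝕜] F) le_rfl).exists_antilipschitzWith
    (Submodule.ker_liftQ_eq_bot _ _ _ le_rfl)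
  refine ⟨C, hC, fun x => ?_⟩
  calc infDist x K = ‖(Submodule.Quotient.mk x : E ⧸ K)‖ :=
        (QuotientAddGroup.norm_mk (S := K.toAddSubgroup) x).symm
    _ ≤ C * ‖A x‖ := hA.le_mul_norm (map_zero _) _

theorem abs_inner_le_infDist_setOf_inner_eq_zero {X : Type*} [NormedAddCommGroup X]
    [InnerProductSpace ℝ X] {g : X} (hg : ‖g‖ ≤ 1) (x : X) :
    |⟪g, x⟫| ≤ infDist x {y : X | ⟪g, y⟫ = 0} := by
  refine (le_infDist ⟨0, by simp⟩).2 fun y (hy : ⟪g, y⟫ = 0) => ?_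
  calc |⟪g, x⟫| = |⟪g, x - y⟫| := by rw [inner_sub_right, hy, sub_zero]
    _ ≤ ‖g‖ * ‖x - y‖ := abs_real_inner_le_norm g (x - y)
    _ ≤ dist x y := by rw [dist_eq_norm]; exact mul_le_of_le_one_left (norm_nonneg _) hg

theorem ker_pi_innerSL {X : Type*} [NormedAddCommGroup X] [InnerProductSpace ℝ X] {J : Type*}
    (f : J → X) :
    (LinearMap.ker (ContinuousLinearMap.pi fun j => innerSL ℝ (f j) : X →ₗ[ℝ] J → ℝ) : Set X) =
      ⋂ j, {y : X | ⟪f j, y⟫ = 0} := by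
  ext y
  simp [funext_iff]

theorem linear_regularity_hyperplanes_general {X : Type*} [NormedAddCommGroup X]
    [InnerProductSpace ℝ X] {J : Type*} [Fintype J]
    (f : J → X) (hf : ∀ j, ‖f j‖ = 1) :
    ∃ μ > (0 : ℝ), ∀ x : X,
      μ * Metric.infDist x (⋂ j, {y : X | ⟪f j, y⟫ = (0 : ℝ)}) ≤
        ⨆ j, Metric.infDist x {y : X | ⟪f j, y⟫ = (0 : ℝ)} := by
  set A : X →L[ℝ] J → ℝ := ContinuousLinearMap.pi fun j => innerSL ℝ (f j)
  obtain ⟨C, hC, hA⟩ := A.exists_infDist_ker_le_mul_norm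
  refine ⟨C⁻¹, inv_pos.2 hC, fun x => ?_⟩
  have hbdd : BddAbove (Set.range fun j => infDist x {y : X | ⟪f j, y⟫ = 0}) :=
    (Set.finite_range _).bddAbove
  have hAx : ‖A x‖ ≤ ⨆ j, infDist x {y : X | ⟪f j, y⟫ = 0} := by
    refine (pi_norm_le_iff_of_nonneg (Real.iSup_nonneg fun j => infDist_nonneg)).2 fun j => ?_
    calc ‖A x j‖ = |⟪f j, x⟫| := Real.norm_eq_abs _
      _ ≤ infDist x {y : X | ⟪f j, y⟫ = 0} :=
        abs_inner_le_infDist_setOf_inner_eq_zero (hf j).le x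
      _ ≤ _ := le_ciSup hbdd j
  rw [inv_mul_le_iff₀ hC, ← ker_pi_innerSL]
  exact (hA x).trans (mul_le_mul_of_nonneg_left hAx hC.le)

/-- Lemma 5.5: linear regularity for a finite system of hyperplanes through the
origin: there is `μ̄ > 0` with `max_j dist(x, H_j) ≥ μ̄ · dist(x, ∩_j H_j)` for all
`x`. -/
theorem linear_regularity_hyperplanes {X : Type*} [NormedAddCommGroup X]
    [InnerProductSpace ℝ X] [CompleteSpace X] {J : Type*} [Fintype J] [Nonempty J]
    (f : J → X) (hf : ∀ j, ‖f j‖ = 1) :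
    ∃ μ > (0 : ℝ), ∀ x : X,
      μ * Metric.infDist x (⋂ j, {y : X | ⟪f j, y⟫ = (0 : ℝ)}) ≤
        ⨆ j, Metric.infDist x {y : X | ⟪f j, y⟫ = (0 : ℝ)} :=
  linear_regularity_hyperplanes_general f hf
end

section
/- Let X be a real Hilbert space. For i ∈ {1,2}, let m_i be a positive integer and let H^{(i)}_1, …, H^{(i)}_{m_i} be closed linear subspaces of X; for S ∈ {0,1}^{m_i} define P̄_S := Q_{S,m_i} ∘ Q_{S,m_i−1} ∘ ⋯ ∘ Q_{S,1}, where Q_{S,j} is the orthogonal projection onto H^{(i)}_j if S_j = 1 and the identity if S_j = 0; and for E, D ∈ {0,1}^{m_i} with E ≥ D componentwise define K(E, D, x) := co{ P̄_S(x) : S ∈ {0,1}^{m_i}, E ≥ S ≥ D }. Let E^{(i)} ≥ D^{(i)} in {0,1}^{m_i} for i = 1,2, and let x₁, x₂, x₃ ∈ X. If x₂ ∈ K(E^{(1)}, D^{(1)}, x₁) (computed with respect to the subspaces H^{(1)}_1,…,H^{(1)}_{m₁}) and x₃ ∈ K(E^{(2)}, D^{(2)}, x₂) (computed with respect to H^{(2)}_1,…,H^{(2)}_{m₂}),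 then x₃ ∈ K([E^{(1)},E^{(2)}], [D^{(1)},D^{(2)}], x₁) computed with respect to the concatenated sequence of subspaces H^{(1)}_1,…,H^{(1)}_{m₁}, H^{(2)}_1,…,H^{(2)}_{m₂}, where [E^{(1)},E^{(2)}] and [D^{(1)},D^{(2)}] denote concatenation of the 0–1 vectors. (Theorem 6.3.) -/
/-! Every `P̄_T` is a composite of orthogonal projections, hence linear, so it maps the convex
hull `K(E¹, D¹, x₁)` into the convex hull of the points `P̄_T (P̄_S x₁) = P̄_{[S,T]} x₁`, which lie
in `K([E¹,E²], [D¹,D²], x₁)`. Since that set is convex, it then contains the convex hull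
`K(E², D², x₂)` of the points `P̄_T x₂`. -/

open scoped RealInnerProductSpace
open Classical

/-- The metric projection onto a set `C`: the nearest point to `z` in `C`, when a
(necessarily unique, for `C` nonempty closed convex in a Hilbert space) nearest
point exists; `z` itself otherwise. -/
noncomputable def metricProj {X : Type*} [NormedAddCommGroup X] (C : Set X) (z : X) : X :=
  if h : ∃ p, p ∈ C ∧ ∀ y ∈ C, ‖z - p‖ ≤ ‖z - y‖ then h.choose else z

/-- `P̄_S = Q_{S,k} ∘ ⋯ ∘ Q_{S,1}`, where `Q_{S,j}` is the orthogonal projection onto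
the subspace `H j` if `S j = true` and the identity otherwise. -/
noncomputable def barP {X : Type*} [NormedAddCommGroup X] [InnerProductSpace ℝ X]
    {k : ℕ} (H : Fin k → Submodule ℝ X) (S : Fin k → Bool) (x : X) : X :=
  Fin.foldl k (fun acc j => if S j then metricProj (H j : Set X) acc else acc) x

/-- `K(E, D, x) = co{ P̄_S(x) : E ≥ S ≥ D }`. -/
noncomputable def Kset {X : Type*} [NormedAddCommGroup X] [InnerProductSpace ℝ X]
    {k : ℕ} (H : Fin k → Submodule ℝ X) (E D : Fin k → Bool) (x : X) : Set X :=
  convexHull ℝ {y : X | ∃ S : Fin k → Bool, (∀ j, D j ≤ S j ∧ S j ≤ E j) ∧ y = barP H S x}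

section

variable {𝕜 E : Type*} [RCLike 𝕜] [NormedAddCommGroup E] [InnerProductSpace 𝕜 E]
  (K : Submodule 𝕜 E) [K.HasOrthogonalProjection]

lemma norm_sub_starProjection_le (z : E) {y : E} (hy : y ∈ K) :
    ‖z - K.starProjection z‖ ≤ ‖z - y‖ := by
  rw [Submodule.starProjection_minimal]
  exact ciInf_le ⟨0, by rintro r ⟨w, rfl⟩; positivity⟩ (⟨y, hy⟩ : K)

lemma eq_starProjection_of_forall_norm_sub_le {z p : E} (hp : p ∈ K)
    (hmin : ∀ y ∈ K, ‖z - p‖ ≤ ‖z - y‖) : K.starProjection z = p := by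
  refine Submodule.eq_starProjection_of_mem_of_inner_eq_zero hp ?_
  rw [← K.norm_eq_iInf_iff_inner_eq_zero hp]
  exact le_antisymm (le_ciInf fun w => hmin w w.2)
    (ciInf_le ⟨0, by rintro r ⟨w, rfl⟩; positivity⟩ (⟨p, hp⟩ : K))

end

section

variable {X : Type*} [NormedAddCommGroup X] [InnerProductSpace ℝ X]

lemma metricProj_eq_starProjection (K : Submodule ℝ X) [K.HasOrthogonalProjection] (z : X) :
    metricProj (K : Set X) z = K.starProjection z := by
  have hex : ∃ p, p ∈ (K : Set X) ∧ ∀ y ∈ (K : Set X), ‖z - p‖ ≤ ‖z - y‖ :=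
    ⟨_, K.starProjection_apply_mem z, fun _ => norm_sub_starProjection_le K z⟩
  rw [metricProj, dif_pos hex]
  exact (eq_starProjection_of_forall_norm_sub_le K hex.choose_spec.1 hex.choose_spec.2).symm

lemma barP_append {m₁ m₂ : ℕ} (H1 : Fin m₁ → Submodule ℝ X) (H2 : Fin m₂ → Submodule ℝ X)
    (S1 : Fin m₁ → Bool) (S2 : Fin m₂ → Bool) (x : X) :
    barP (Fin.append H1 H2) (Fin.append S1 S2) x = barP H2 S2 (barP H1 S1 x) := by
  unfold barP
  rw [Fin.foldl_add]
  congr 1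
  · funext a j; simp only [Fin.append_right]
  · congr 1
    funext a j
    rw [show Fin.castLE _ j = Fin.castAdd m₂ j from rfl, Fin.append_left, Fin.append_left]

lemma exists_linearMap_eq_barP [CompleteSpace X] {k : ℕ} (H : Fin k → Submodule ℝ X)
    (hH : ∀ j, IsClosed (H j : Set X)) (S : Fin k → Bool) :
    ∃ f : X →ₗ[ℝ] X, barP H S = f := by
  induction k with
  | zero => exact ⟨LinearMap.id, funext fun x => by simp [barP]⟩
  | succ k ih =>
    obtain ⟨f, hf⟩ := ih (H ∘ Fin.castSucc) (fun j => hH _) (S ∘ Fin.castSucc)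
    have hstep : ∀ x, barP H S x = if S (Fin.last k) then
        metricProj (H (Fin.last k) : Set X) (f x) else f x := fun x => by
      rw [← hf]; exact Fin.foldl_succ_last ..
    by_cases hs : S (Fin.last k)
    · have : CompleteSpace (H (Fin.last k)) := (hH _).completeSpace_coe
      refine ⟨(H (Fin.last k)).starProjection.toLinearMap ∘ₗ f, funext fun x => ?_⟩
      rw [hstep, if_pos hs, metricProj_eq_starProjection]
      rfl
    · exact ⟨f, funext fun x => by rw [hstep, if_neg hs]⟩

lemma barP_mem_Kset_append [CompleteSpace X] {m₁ m₂ : ℕ}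
    (H1 : Fin m₁ → Submodule ℝ X) (H2 : Fin m₂ → Submodule ℝ X)
    (hH2 : ∀ j, IsClosed (H2 j : Set X)) (E1 D1 : Fin m₁ → Bool) (E2 D2 : Fin m₂ → Bool)
    {x₁ x₂ : X} (h12 : x₂ ∈ Kset H1 E1 D1 x₁) {T : Fin m₂ → Bool}
    (hT : ∀ j, D2 j ≤ T j ∧ T j ≤ E2 j) :
    barP H2 T x₂ ∈ Kset (Fin.append H1 H2) (Fin.append E1 E2) (Fin.append D1 D2) x₁ := by
  obtain ⟨f, hf⟩ := exists_linearMap_eq_barP H2 hH2 T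
  have himage : f x₂ ∈ convexHull ℝ
      (f '' {y | ∃ S : Fin m₁ → Bool, (∀ j, D1 j ≤ S j ∧ S j ≤ E1 j) ∧ y = barP H1 S x₁}) := by
    rw [← f.image_convexHull]
    exact Set.mem_image_of_mem f h12
  rw [hf]
  refine convexHull_mono ?_ himage
  rintro _ ⟨_, ⟨S, hS, rfl⟩, rfl⟩
  refine ⟨Fin.append S T, Fin.addCases (fun i => ?_) (fun i => ?_), by rw [barP_append, hf]⟩
  · simpa only [Fin.append_left] using hS i
  · simpa only [Fin.append_right] using hT i

end

theorem Kset_concat_general {X : Type*} [NormedAddCommGroup X] [InnerProductSpace ℝ X]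
    [CompleteSpace X] {m₁ m₂ : ℕ}
    (H1 : Fin m₁ → Submodule ℝ X) (H2 : Fin m₂ → Submodule ℝ X)
    (hH2 : ∀ j, IsClosed (H2 j : Set X))
    (E1 D1 : Fin m₁ → Bool) (E2 D2 : Fin m₂ → Bool)
    (x₁ x₂ x₃ : X)
    (h12 : x₂ ∈ Kset H1 E1 D1 x₁) (h23 : x₃ ∈ Kset H2 E2 D2 x₂) :
    x₃ ∈ Kset (Fin.append H1 H2) (Fin.append E1 E2) (Fin.append D1 D2) x₁ := by
  refine convexHull_min ?_ (convex_convexHull ℝ _) h23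
  rintro _ ⟨T, hT, rfl⟩
  exact barP_mem_Kset_append H1 H2 hH2 E1 D1 E2 D2 h12 hT

/-- Theorem 6.3: the sets `K(E, D, x)` compose under concatenation of the families
of subspaces. -/
theorem Kset_concat {X : Type*} [NormedAddCommGroup X] [InnerProductSpace ℝ X]
    [CompleteSpace X] {m₁ m₂ : ℕ} (hm₁ : 0 < m₁) (hm₂ : 0 < m₂)
    (H1 : Fin m₁ → Submodule ℝ X) (H2 : Fin m₂ → Submodule ℝ X)
    (hH1 : ∀ j, IsClosed (H1 j : Set X)) (hH2 : ∀ j, IsClosed (H2 j : Set X))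
    (E1 D1 : Fin m₁ → Bool) (E2 D2 : Fin m₂ → Bool)
    (hED1 : ∀ j, D1 j ≤ E1 j) (hED2 : ∀ j, D2 j ≤ E2 j)
    (x₁ x₂ x₃ : X)
    (h12 : x₂ ∈ Kset H1 E1 D1 x₁) (h23 : x₃ ∈ Kset H2 E2 D2 x₂) :
    x₃ ∈ Kset (Fin.append H1 H2) (Fin.append E1 E2) (Fin.append D1 D2) x₁ :=
  Kset_concat_general H1 H2 hH2 E1 D1 E2 D2 x₁ x₂ x₃ h12 h23
end

section
/- Work in ℝⁿ with the Euclidean inner product. Let m, K be positive integers, let f_{i,r} ∈ ℝⁿ be unit vectors and c_{i,r} ∈ ℝ for i ∈ {1,…,m}, r ∈ {1,…,K}, let ℋ_{i,r} = {x : ⟨x, f_{i,r}⟩ ≤ c_{i,r}} and H_{i,r} = {x : ⟨x, f_{i,r}⟩ = c_{i,r}}, and suppose C := ∩_{i,r} ℋ_{i,r} is nonempty. Let d ∈ ℝⁿ satisfy P_C(d) = 0. Then for every δ₁ > 0 there exists δ₂ > 0 with the following property: for all nonnegative scalars (λ_{i,r}), setting x = d − Σ_{i,r} λ_{i,r} f_{i,r},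 if ‖x‖ > δ₁ then max_{i,r} max{ dist(x, ℋ_{i,r}), min(dist(x, H_{i,r}), λ_{i,r}) } > δ₂. (Proposition 7.2: the dual-decrease estimate is bounded below when the primal iterate is bounded away from the solution.) -/
/-!
If the claim failed, there would be multipliers `λₖ ≥ 0` with residuals at most `1 / (k + 1)`
while `xₖ = d - ∑ λₖⱼ fⱼ` stays away from `0 = P_C d`. For any `w` with `⟪w, fⱼ⟫ ≥ 0` for each
`j` whose multipliers are not eventually small, `⟪w, d - xₖ⟫ = ∑ λₖⱼ ⟪w, fⱼ⟫` is bounded below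
by a null sequence. If `‖xₖ‖ → ∞`, a limit direction `w` of `xₖ / ‖xₖ‖` has this property,
since constraints with large multipliers are nearly active; this contradicts `⟪w, xₖ⟫ → ∞`.
Otherwise a subsequence converges to some `y ∈ C`, which has the property because `c ≥ 0`, so
`⟪y, d - y⟫ ≥ 0`; together with `‖d‖ ≤ ‖d - y‖` this forces `y = 0`.
-/

open scoped RealInnerProductSpace

open Filter Topology

variable {E : Type*} [NormedAddCommGroup E] [InnerProductSpace ℝ E]

lemma abs_inner_sub_inner_le_dist {g : E} (hg : ‖g‖ = 1) (x z : E) :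
    |⟪x, g⟫ - ⟪z, g⟫| ≤ dist x z := by
  rw [← inner_sub_left, dist_eq_norm]
  simpa [hg] using abs_real_inner_le_norm (x - z) g

lemma inner_smul_left_of_norm_eq_one {g : E} (hg : ‖g‖ = 1) (c : ℝ) : ⟪c • g, g⟫ = c := by
  rw [real_inner_smul_left, real_inner_self_eq_norm_sq, hg, one_pow, mul_one]

lemma sub_le_infDist_setOf_inner_le {g : E} (hg : ‖g‖ = 1) (x : E) (c : ℝ) :
    ⟪x, g⟫ - c ≤ Metric.infDist x {z | ⟪z, g⟫ ≤ c} :=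
  (Metric.le_infDist ⟨c • g, (inner_smul_left_of_norm_eq_one hg c).le⟩).2 fun z hz =>
    (sub_le_sub_left hz _).trans ((le_abs_self _).trans (abs_inner_sub_inner_le_dist hg x z))

lemma abs_sub_le_infDist_setOf_inner_eq {g : E} (hg : ‖g‖ = 1) (x : E) (c : ℝ) :
    |⟪x, g⟫ - c| ≤ Metric.infDist x {z | ⟪z, g⟫ = c} :=
  (Metric.le_infDist ⟨c • g, inner_smul_left_of_norm_eq_one hg c⟩).2 fun z hz => by
    rw [← show ⟪z, g⟫ = c from hz]
    exact abs_inner_sub_inner_le_dist hg x z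

lemma eq_zero_of_norm_le_norm_sub_of_inner_sub_nonneg {d y : E} (hd : ‖d‖ ≤ ‖d - y‖)
    (hy : 0 ≤ ⟪y, d - y⟫) : y = 0 := by
  have hsq : ‖d - y‖ ^ 2 = ‖d‖ ^ 2 - 2 * ⟪y, d - y⟫ - ‖y‖ ^ 2 := by
    rw [norm_sub_sq_real, inner_sub_right, real_inner_self_eq_norm_sq, real_inner_comm]
    ring
  have : ‖y‖ ^ 2 ≤ 0 := by nlinarith [pow_le_pow_left₀ (norm_nonneg d) hd 2]
  exact norm_eq_zero.1 (pow_eq_zero_iff two_ne_zero |>.1 (le_antisymm this (sq_nonneg _)))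

lemma eventually_or_le_of_tendsto {α : Type*} {l : Filter α} {P : α → Prop} {a b : α → ℝ}
    {A B : ℝ} (ha : Tendsto a l (𝓝 A)) (hb : Tendsto b l (𝓝 B))
    (h : ∀ k, P k ∨ b k ≤ a k) : (∀ᶠ k in l, P k) ∨ B ≤ A :=
  or_iff_not_imp_left.2 fun hP => le_of_tendsto_of_tendsto_of_frequently hb ha
    ((not_eventually.1 hP).mono fun k hk => (h k).resolve_left hk)

variable {ι : Type*} [Fintype ι]

lemma neg_mul_le_inner_sum_smul {f : ι → E} {lam : ι → ℝ} {ε : ℝ}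
    {w : E} (hε : 0 ≤ ε) (hlam : ∀ j, 0 ≤ lam j) (h : ∀ j, lam j ≤ ε ∨ 0 ≤ ⟪w, f j⟫) :
    -(ε * (‖w‖ * ∑ j, ‖f j‖)) ≤ ⟪w, ∑ j, lam j • f j⟫ := by
  rw [inner_sum, Finset.mul_sum, Finset.mul_sum, ← Finset.sum_neg_distrib]
  refine Finset.sum_le_sum fun j _ => ?_
  rw [real_inner_smul_right]
  have hcs : -(‖w‖ * ‖f j‖) ≤ ⟪w, f j⟫ := neg_le_of_abs_le (abs_real_inner_le_norm w (f j))
  have hwf : 0 ≤ ‖w‖ * ‖f j‖ := by positivity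
  rcases h j with hsmall | hpos <;> nlinarith [hlam j]

/-- `x = d - ∑ⱼ lam j • f j` satisfies, up to `ε`, the KKT conditions for `x = P_C d` with
`C = ⋂ⱼ {z | ⟪z, f j⟫ ≤ c j}` and multipliers `lam`. -/
structure IsApproxKKT (f : ι → E) (c : ι → ℝ) (d : E) (lam : ι → ℝ) (ε : ℝ) (x : E) :
    Prop where
  tol_nonneg : 0 ≤ ε
  sub_eq_sum : d - x = ∑ j, lam j • f j
  nonneg : ∀ j, 0 ≤ lam j
  inner_le : ∀ j, ⟪x, f j⟫ ≤ c j + ε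
  le_or_le_inner : ∀ j, lam j ≤ ε ∨ c j - ε ≤ ⟪x, f j⟫

lemma isApproxKKT_of_max_infDist_le {f : ι → E} {c : ι → ℝ} {d x : E} {lam : ι → ℝ} {ε : ℝ}
    (hf : ∀ j, ‖f j‖ = 1) (hε : 0 ≤ ε) (hx : d - x = ∑ j, lam j • f j) (hlam : ∀ j, 0 ≤ lam j)
    (h : ∀ j, max (Metric.infDist x {z | ⟪z, f j⟫ ≤ c j})
      (min (Metric.infDist x {z | ⟪z, f j⟫ = c j}) (lam j)) ≤ ε) :
    IsApproxKKT f c d lam ε x where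
  tol_nonneg := hε
  sub_eq_sum := hx
  nonneg := hlam
  inner_le j := by
    linarith [sub_le_infDist_setOf_inner_le (hf j) x (c j), (le_max_left _ _).trans (h j)]
  le_or_le_inner j :=
    (min_le_iff.1 ((le_max_right _ _).trans (h j))).symm.imp_right fun hH => by
      linarith [abs_sub_le_infDist_setOf_inner_eq (hf j) x (c j), neg_abs_le (⟪x, f j⟫ - c j)]

namespace IsApproxKKT

variable {f : ι → E} {c : ι → ℝ} {d : E} {lam : ℕ → ι → ℝ} {ε : ℕ → ℝ} {x : ℕ → E}

lemma eventually_neg_le_inner_sub (hKKT : ∀ k, IsApproxKKT f c d (lam k) (ε k) (x k)) {w : E}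
    (hw : ∀ j, (∀ᶠ k in atTop, lam k j ≤ ε k) ∨ 0 ≤ ⟪w, f j⟫) :
    ∀ᶠ k in atTop, -(ε k * (‖w‖ * ∑ j, ‖f j‖)) ≤ ⟪w, d - x k⟫ := by
  have hall : ∀ᶠ k in atTop, ∀ j, lam k j ≤ ε k ∨ 0 ≤ ⟪w, f j⟫ :=
    eventually_all.2 fun j =>
      (hw j).elim (·.mono fun _ => Or.inl) fun hpos => .of_forall fun _ => Or.inr hpos
  filter_upwards [hall] with k hk
  rw [(hKKT k).sub_eq_sum]
  exact neg_mul_le_inner_sum_smul (hKKT k).tol_nonneg (hKKT k).nonneg hk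

lemma eq_zero_of_tendsto (hc : ∀ j, 0 ≤ c j)
    (hproj : ∀ z, (∀ j, ⟪z, f j⟫ ≤ c j) → ‖d‖ ≤ ‖d - z‖)
    (hKKT : ∀ k, IsApproxKKT f c d (lam k) (ε k) (x k)) (hε : Tendsto ε atTop (𝓝 0)) {y : E}
    (hy : Tendsto x atTop (𝓝 y)) : y = 0 := by
  have hinner j : Tendsto (fun k => ⟪x k, f j⟫) atTop (𝓝 ⟪y, f j⟫) :=
    hy.inner tendsto_const_nhds
  have hyC j : ⟪y, f j⟫ ≤ c j :=
    le_of_tendsto_of_tendsto' (hinner j) (by simpa using tendsto_const_nhds.add hε)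
      fun k => (hKKT k).inner_le j
  have hyf j : (∀ᶠ k in atTop, lam k j ≤ ε k) ∨ 0 ≤ ⟪y, f j⟫ :=
    (eventually_or_le_of_tendsto (hinner j) (by simpa using tendsto_const_nhds.sub hε)
      fun k => (hKKT k).le_or_le_inner j).imp_right (hc j).trans
  have hlow : Tendsto (fun k => -(ε k * (‖y‖ * ∑ j, ‖f j‖))) atTop (𝓝 0) := by
    simpa using (hε.mul_const _).neg
  exact eq_zero_of_norm_le_norm_sub_of_inner_sub_nonneg (hproj y hyC)
    (le_of_tendsto_of_tendsto hlow (tendsto_const_nhds.inner (tendsto_const_nhds.sub hy))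
      (eventually_neg_le_inner_sub hKKT hyf))

lemma not_tendsto_norm_atTop [ProperSpace E]
    (hKKT : ∀ k, IsApproxKKT f c d (lam k) (ε k) (x k)) (hε : Tendsto ε atTop (𝓝 0)) :
    ¬Tendsto (fun k => ‖x k‖) atTop atTop := by
  intro htop
  set u : ℕ → E := fun k => ‖x k‖⁻¹ • x k with hu
  obtain ⟨v, -, φ, hφ, hv⟩ := tendsto_subseq_of_bounded (Metric.isBounded_closedBall (x := 0))
    (x := u) fun k => by simpa [u, norm_smul] using inv_mul_le_one (a := ‖x k‖)
  have htopφ : Tendsto (fun k => ‖x (φ k)‖) atTop atTop := htop.comp hφ.tendsto_atTop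
  have hxφ : ∀ᶠ k in atTop, x (φ k) ≠ 0 :=
    (htopφ.eventually_gt_atTop 0).mono fun _ hk => norm_pos_iff.1 hk
  have hv1 : ‖v‖ = 1 :=
    tendsto_nhds_unique hv.norm (tendsto_const_nhds.congr' (hxφ.mono fun k hk =>
      (norm_smul_inv_norm (𝕜 := ℝ) hk).symm))
  have hvf j : (∀ᶠ k in atTop, lam (φ k) j ≤ ε (φ k)) ∨ 0 ≤ ⟪v, f j⟫ := by
    have hlow : Tendsto (fun k => ‖x (φ k)‖⁻¹ * (c j - ε (φ k))) atTop (𝓝 0) := by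
      simpa using htopφ.inv_tendsto_atTop.mul (tendsto_const_nhds.sub (hε.comp hφ.tendsto_atTop))
    refine eventually_or_le_of_tendsto (hv.inner (𝕜 := ℝ) (tendsto_const_nhds (x := f j))) hlow
      fun k => ((hKKT (φ k)).le_or_le_inner j).imp_right fun hk => ?_
    rw [Function.comp_apply, hu, real_inner_smul_left]
    exact mul_le_mul_of_nonneg_left hk (inv_nonneg.2 (norm_nonneg _))
  have hgrow : Tendsto (fun k => ⟪v, x (φ k)⟫) atTop atTop := by
    have hvv : Tendsto (fun k => ⟪v, u (φ k)⟫) atTop (𝓝 1) := by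
      simpa [real_inner_self_eq_norm_sq, hv1] using
        (tendsto_const_nhds (x := v)).inner (𝕜 := ℝ) hv
    refine (htopφ.atTop_mul_pos one_pos hvv).congr' (hxφ.mono fun k hk => ?_)
    rw [hu, real_inner_smul_right, mul_inv_cancel_left₀ (norm_ne_zero_iff.2 hk)]
  have hbound : ∀ᶠ k in atTop, ⟪v, x (φ k)⟫ ≤ ⟪v, d⟫ + ε (φ k) * (‖v‖ * ∑ j, ‖f j‖) :=
    (eventually_neg_le_inner_sub (fun k => hKKT (φ k)) hvf).mono fun k hk => by
      rw [inner_sub_right] at hk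
      linarith
  have hlim :
      Tendsto (fun k => ⟪v, d⟫ + ε (φ k) * (‖v‖ * ∑ j, ‖f j‖)) atTop (𝓝 ⟪v, d⟫) := by
    simpa using tendsto_const_nhds.add ((hε.comp hφ.tendsto_atTop).mul_const _)
  exact not_tendsto_atTop_of_tendsto_nhds hlim (tendsto_atTop_mono' _ hbound hgrow)

lemma tendsto_zero [ProperSpace E] (hc : ∀ j, 0 ≤ c j)
    (hproj : ∀ z, (∀ j, ⟪z, f j⟫ ≤ c j) → ‖d‖ ≤ ‖d - z‖)
    (hKKT : ∀ k, IsApproxKKT f c d (lam k) (ε k) (x k)) (hε : Tendsto ε atTop (𝓝 0)) :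
    Tendsto x atTop (𝓝 0) := by
  refine tendsto_of_subseq_tendsto fun ns hns => ?_
  obtain ⟨R, hR⟩ : ∃ R, ∃ᶠ k in atTop, ‖x (ns k)‖ ≤ R := by
    by_contra! hfar
    exact not_tendsto_norm_atTop (fun k => hKKT (ns k)) (hε.comp hns)
      (tendsto_atTop.2 fun R => (hfar R).mono fun _ => le_of_lt)
  obtain ⟨y, -, φ, hφ, hy⟩ := tendsto_subseq_of_frequently_bounded
    (Metric.isBounded_closedBall (x := 0) (r := R)) (x := x ∘ ns) (by simpa using hR)
  refine ⟨φ, ?_⟩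
  rwa [← eq_zero_of_tendsto hc hproj (fun k => hKKT (ns (φ k)))
    ((hε.comp hns).comp hφ.tendsto_atTop) hy]

end IsApproxKKT

theorem dual_decrease_bounded_below_general {n m K : ℕ}
    (f : Fin m → Fin K → EuclideanSpace ℝ (Fin n)) (hf : ∀ i r, ‖f i r‖ = 1)
    (c : Fin m → Fin K → ℝ) (d : EuclideanSpace ℝ (Fin n))
    (hmem : (0 : EuclideanSpace ℝ (Fin n)) ∈
      ⋂ i, ⋂ r, {z : EuclideanSpace ℝ (Fin n) | ⟪z, f i r⟫ ≤ c i r})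
    (hproj : ∀ z ∈ ⋂ i, ⋂ r, {z : EuclideanSpace ℝ (Fin n) | ⟪z, f i r⟫ ≤ c i r},
      ‖d - 0‖ ≤ ‖d - z‖) :
    ∀ δ₁ > (0 : ℝ), ∃ δ₂ > (0 : ℝ), ∀ lam : Fin m → Fin K → ℝ,
      (∀ i r, 0 ≤ lam i r) →
      δ₁ < ‖d - ∑ i, ∑ r, lam i r • f i r‖ →
      ∃ i r, δ₂ <
        max (Metric.infDist (d - ∑ i, ∑ r, lam i r • f i r)
              {z : EuclideanSpace ℝ (Fin n) | ⟪z, f i r⟫ ≤ c i r})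
            (min (Metric.infDist (d - ∑ i, ∑ r, lam i r • f i r)
              {z : EuclideanSpace ℝ (Fin n) | ⟪z, f i r⟫ = c i r}) (lam i r)) := by
  have hc (p : Fin m × Fin K) : 0 ≤ c p.1 p.2 := by
    simpa using Set.mem_iInter₂.1 hmem p.1 p.2
  have hproj' (z) (hz : ∀ p : Fin m × Fin K, ⟪z, f p.1 p.2⟫ ≤ c p.1 p.2) :
      ‖d‖ ≤ ‖d - z‖ := by
    simpa using hproj z (Set.mem_iInter₂.2 fun i r => hz (i, r))
  intro δ₁ hδ₁
  by_contra! hsmall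
  choose lam hlam hfar hres using
    fun k : ℕ => hsmall (1 / ((k : ℝ) + 1)) Nat.one_div_pos_of_nat
  have hKKT (k : ℕ) : IsApproxKKT (fun p : Fin m × Fin K => f p.1 p.2) (fun p => c p.1 p.2) d
      (fun p => lam k p.1 p.2) (1 / ((k : ℝ) + 1)) (d - ∑ i, ∑ r, lam k i r • f i r) :=
    isApproxKKT_of_max_infDist_le (fun p => hf p.1 p.2) Nat.one_div_pos_of_nat.le
      (by rw [sub_sub_cancel, Fintype.sum_prod_type' (fun i r => lam k i r • f i r)])
      (fun p => hlam k p.1 p.2) (fun p => hres k p.1 p.2)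
  have hconv := (IsApproxKKT.tendsto_zero hc hproj' hKKT
    tendsto_one_div_add_atTop_nhds_zero_nat).norm
  obtain ⟨k, hk⟩ := (hconv.eventually (gt_mem_nhds (by simpa using hδ₁))).exists
  exact (hfar k).not_gt (by simpa using hk)

/-- Proposition 7.2: in `ℝⁿ`, if the point `x = d − ∑_{i,r} λ_{i,r} f_{i,r}`
(with nonnegative multipliers) is bounded away from the solution `P_C(d) = 0`,
then the dual-decrease estimate
`max_{i,r} max{dist(x, ℋ_{i,r}), min(dist(x, H_{i,r}), λ_{i,r})}`
is bounded below by a positive constant. -/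
theorem dual_decrease_bounded_below {n m K : ℕ} (hm : 0 < m) (hK : 0 < K)
    (f : Fin m → Fin K → EuclideanSpace ℝ (Fin n)) (hf : ∀ i r, ‖f i r‖ = 1)
    (c : Fin m → Fin K → ℝ) (d : EuclideanSpace ℝ (Fin n))
    (hCne : (⋂ i, ⋂ r, {z : EuclideanSpace ℝ (Fin n) | ⟪z, f i r⟫ ≤ c i r}).Nonempty)
    (hmem : (0 : EuclideanSpace ℝ (Fin n)) ∈
      ⋂ i, ⋂ r, {z : EuclideanSpace ℝ (Fin n) | ⟪z, f i r⟫ ≤ c i r})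
    (hproj : ∀ z ∈ ⋂ i, ⋂ r, {z : EuclideanSpace ℝ (Fin n) | ⟪z, f i r⟫ ≤ c i r},
      ‖d - 0‖ ≤ ‖d - z‖) :
    ∀ δ₁ > (0 : ℝ), ∃ δ₂ > (0 : ℝ), ∀ lam : Fin m → Fin K → ℝ,
      (∀ i r, 0 ≤ lam i r) →
      δ₁ < ‖d - ∑ i, ∑ r, lam i r • f i r‖ →
      ∃ i r, δ₂ <
        max (Metric.infDist (d - ∑ i, ∑ r, lam i r • f i r)
              {z : EuclideanSpace ℝ (Fin n) | ⟪z, f i r⟫ ≤ c i r})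
            (min (Metric.infDist (d - ∑ i, ∑ r, lam i r • f i r)
              {z : EuclideanSpace ℝ (Fin n) | ⟪z, f i r⟫ = c i r}) (lam i r)) :=
  dual_decrease_bounded_below_general f hf c d hmem hproj
end

section
/- Let A ∈ ℝ^{m×n} be a matrix with linearly independent rows, let b ∈ ℝᵐ and d ∈ ℝⁿ, and let S = {x ∈ ℝⁿ : Ax ≤ b}. Then for every δ₃ > 0 there exists δ₂ > 0 such that for all b̃ ∈ ℝᵐ and d̃ ∈ ℝⁿ with ‖b − b̃‖_∞ ≤ δ₂ and ‖d − d̃‖ ≤ δ₂, setting S̃ = {x ∈ ℝⁿ : Ax ≤ b̃}, one has ‖P_S(d) − P_{S̃}(d̃)‖ ≤ δ₃. (Lemma 7.3: sensitivity analysis of projections onto polyhedra.) -/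
open scoped RealInnerProductSpace

/-- From linear independence of the rows, the Gram matrix is invertible, hence any
prescribed values of the inner products can be achieved. -/
lemma exists_inner_eq_aux {m n : ℕ} (A : Fin m → EuclideanSpace ℝ (Fin n))
    (hA : LinearIndependent ℝ A) (c : Fin m → ℝ) :
    ∃ w : EuclideanSpace ℝ (Fin n), ∀ i, ⟪A i, w⟫ = c i := by
  classical
  set G : Matrix (Fin m) (Fin m) ℝ := Matrix.of fun i j => (⟪A i, A j⟫ : ℝ) with hG
  have key : ∀ v : Fin m → ℝ, G.mulVec v = 0 → v = 0 := by
    intro v hv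
    have hcomp : ∀ i, (⟪A i, ∑ j, v j • A j⟫ : ℝ) = G.mulVec v i := by
      intro i
      rw [inner_sum]
      simp only [real_inner_smul_right]
      simp [Matrix.mulVec, dotProduct, hG, mul_comm]
    have hvv : (⟪∑ j, v j • A j, ∑ j, v j • A j⟫ : ℝ) = 0 := by
      rw [sum_inner]
      have : ∀ i, (⟪v i • A i, ∑ j, v j • A j⟫ : ℝ) = v i * G.mulVec v i := by
        intro i; rw [real_inner_smul_left, hcomp]
      simp_rw [this, hv]
      simp
    have hzero : ∑ j, v j • A j = 0 := inner_self_eq_zero.mp hvv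
    funext i
    exact Fintype.linearIndependent_iff.mp hA v hzero i
  have hunit : IsUnit G := by
    rw [← Matrix.mulVec_injective_iff_isUnit]
    intro x y hxy
    have h0 : G.mulVec (x - y) = 0 := by
      rw [Matrix.mulVec_sub, hxy, sub_self]
    have := key _ h0
    exact sub_eq_zero.mp this
  obtain ⟨c', hc'⟩ := Matrix.mulVec_surjective_iff_isUnit.mpr hunit c
  refine ⟨∑ j, c' j • A j, fun i => ?_⟩
  rw [inner_sum]
  simp only [real_inner_smul_right]
  rw [← hc']
  simp [Matrix.mulVec, dotProduct, hG, mul_comm]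

/-- The polyhedron `{x | ∀ i, ⟪A i, x⟫ ≤ b i}` is convex. -/
lemma polyhedron_convex {m n : ℕ} (A : Fin m → EuclideanSpace ℝ (Fin n)) (b : Fin m → ℝ) :
    Convex ℝ {x : EuclideanSpace ℝ (Fin n) | ∀ i, ⟪A i, x⟫ ≤ b i} := by
  intro x hx y hy a c ha hc hac i
  rw [inner_add_right, real_inner_smul_right, real_inner_smul_right]
  have h1 := mul_le_mul_of_nonneg_left (hx i) ha
  have h2 := mul_le_mul_of_nonneg_left (hy i) hc
  have h3 : a * b i + c * b i = b i := by rw [← add_mul, hac, one_mul]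
  linarith

/-- Variational inequality for a minimizer of distance over a convex set. -/
lemma varineq {E : Type*} [NormedAddCommGroup E] [InnerProductSpace ℝ E]
    {K : Set E} (hK : Convex ℝ K) {d p : E} (hp : p ∈ K)
    (hmin : ∀ x ∈ K, ‖d - p‖ ≤ ‖d - x‖) :
    ∀ x ∈ K, ⟪d - p, x - p⟫ ≤ 0 := by
  haveI : Nonempty ↥K := ⟨⟨p, hp⟩⟩
  rw [← norm_eq_iInf_iff_real_inner_le_zero hK hp]
  apply le_antisymm
  · exact le_ciInf fun ⟨x, hx⟩ => hmin x hx
  · have hbdd : BddBelow (Set.range fun x : K => ‖d - (x : E)‖) := by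
      refine ⟨0, ?_⟩
      rintro r ⟨x, rfl⟩
      exact norm_nonneg _
    exact ciInf_le hbdd ⟨p, hp⟩

set_option maxHeartbeats 1000000 in
/-- Lemma 7.3: sensitivity analysis of projections onto polyhedra. `A` is a matrix
with linearly independent rows `A i ∈ ℝⁿ`, `S = {x : Ax ≤ b}` and
`S̃ = {x : Ax ≤ b̃}`. Here `p` and `q` are characterized as the metric projections
`P_S(d)` and `P_S̃(d̃)` respectively. -/
theorem projection_sensitivity {m n : ℕ} (A : Fin m → EuclideanSpace ℝ (Fin n))
    (hA : LinearIndependent ℝ A) (b : Fin m → ℝ) (d : EuclideanSpace ℝ (Fin n)) :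
    ∀ δ₃ > (0 : ℝ), ∃ δ₂ > (0 : ℝ),
      ∀ (btil : Fin m → ℝ) (dtil : EuclideanSpace ℝ (Fin n)),
        (∀ i, |b i - btil i| ≤ δ₂) → ‖d - dtil‖ ≤ δ₂ →
        ∀ p q : EuclideanSpace ℝ (Fin n),
          p ∈ {x : EuclideanSpace ℝ (Fin n) | ∀ i, ⟪A i, x⟫ ≤ b i} →
          (∀ x ∈ {x : EuclideanSpace ℝ (Fin n) | ∀ i, ⟪A i, x⟫ ≤ b i},
            ‖d - p‖ ≤ ‖d - x‖) →
          q ∈ {x : EuclideanSpace ℝ (Fin n) | ∀ i, ⟪A i, x⟫ ≤ btil i} →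
          (∀ x ∈ {x : EuclideanSpace ℝ (Fin n) | ∀ i, ⟪A i, x⟫ ≤ btil i},
            ‖dtil - q‖ ≤ ‖dtil - x‖) →
          ‖p - q‖ ≤ δ₃ := by
  intro δ₃ hδ₃
  -- a vector `w` with `⟪A i, w⟫ = 1` for all `i`
  obtain ⟨w, hw⟩ := exists_inner_eq_aux A hA (fun _ => 1)
  -- a point `x₀` with `⟪A i, x₀⟫ = b i` for all `i`
  obtain ⟨x₀, hx₀⟩ := exists_inner_eq_aux A hA b
  set M : ℝ := ‖d - x₀‖ with hM
  set Kc : ℝ := ‖w‖ * (2 * M + 1 + ‖w‖) with hKc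
  have hM0 : 0 ≤ M := norm_nonneg _
  have hw0 : 0 ≤ ‖w‖ := norm_nonneg _
  have hKc0 : 0 ≤ Kc := by positivity
  refine ⟨min 1 (min (δ₃ / 2) (δ₃ ^ 2 / (4 * (Kc + 1)))), by positivity, ?_⟩
  intro btil dtil hb hd p q hpS hpmin hqS hqmin
  set δ₂ : ℝ := min 1 (min (δ₃ / 2) (δ₃ ^ 2 / (4 * (Kc + 1)))) with hδ₂def
  have hδ₂pos : 0 < δ₂ := by positivity
  have hδ₂le1 : δ₂ ≤ 1 := min_le_left _ _
  have hδ₂half : δ₂ ≤ δ₃ / 2 := le_trans (min_le_right _ _) (min_le_left _ _)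
  have hδ₂quad : δ₂ ≤ δ₃ ^ 2 / (4 * (Kc + 1)) := le_trans (min_le_right _ _) (min_le_right _ _)
  -- variational inequalities
  have VI1 := varineq (polyhedron_convex A b) hpS hpmin
  have VI2 := varineq (polyhedron_convex A btil) hqS hqmin
  -- shifted membership
  have hqshift : q - δ₂ • w ∈ {x : EuclideanSpace ℝ (Fin n) | ∀ i, ⟪A i, x⟫ ≤ b i} := by
    intro i
    rw [inner_sub_right, real_inner_smul_right, hw i]
    have h1 := hqS i
    have h2 := abs_le.mp (hb i)
    linarith
  have hpshift : p - δ₂ • w ∈ {x : EuclideanSpace ℝ (Fin n) | ∀ i, ⟪A i, x⟫ ≤ btil i} := by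
    intro i
    rw [inner_sub_right, real_inner_smul_right, hw i]
    have h1 := hpS i
    have h2 := abs_le.mp (hb i)
    linarith
  have hx₀shift : x₀ - δ₂ • w ∈ {x : EuclideanSpace ℝ (Fin n) | ∀ i, ⟪A i, x⟫ ≤ btil i} := by
    intro i
    rw [inner_sub_right, real_inner_smul_right, hw i, hx₀ i]
    have h2 := abs_le.mp (hb i)
    linarith
  -- bounds on distances to projections
  have hx₀S : x₀ ∈ {x : EuclideanSpace ℝ (Fin n) | ∀ i, ⟪A i, x⟫ ≤ b i} :=
    fun i => le_of_eq (hx₀ i)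
  have hdp : ‖d - p‖ ≤ M := hpmin x₀ hx₀S
  have hdq : ‖dtil - q‖ ≤ M + 1 + ‖w‖ := by
    have h1 : ‖dtil - q‖ ≤ ‖dtil - (x₀ - δ₂ • w)‖ := hqmin _ hx₀shift
    have h2 : ‖dtil - (x₀ - δ₂ • w)‖ ≤ ‖dtil - d‖ + ‖d - x₀‖ + ‖δ₂ • w‖ := by
      have : dtil - (x₀ - δ₂ • w) = (dtil - d) + (d - x₀) + δ₂ • w := by abel
      rw [this]
      exact le_trans (norm_add_le _ _) (by gcongr; exact norm_add_le _ _)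
    have h3 : ‖δ₂ • w‖ = δ₂ * ‖w‖ := by
      rw [norm_smul, Real.norm_eq_abs, abs_of_pos hδ₂pos]
    have h4 : ‖dtil - d‖ = ‖d - dtil‖ := norm_sub_rev _ _
    nlinarith
  -- the two variational inequalities applied at shifted points
  have h1 := VI1 _ hqshift
  have h2 := VI2 _ hpshift
  have e1 : (⟪d - p, q - δ₂ • w - p⟫ : ℝ) = ⟪d - p, q - p⟫ - δ₂ * ⟪d - p, w⟫ := by
    have : q - δ₂ • w - p = (q - p) - δ₂ • w := by abel
    rw [this, inner_sub_right, real_inner_smul_right]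
  have e2 : (⟪dtil - q, p - δ₂ • w - q⟫ : ℝ) = ⟪dtil - q, p - q⟫ - δ₂ * ⟪dtil - q, w⟫ := by
    have : p - δ₂ • w - q = (p - q) - δ₂ • w := by abel
    rw [this, inner_sub_right, real_inner_smul_right]
  have e3 : (⟪d - p, q - p⟫ : ℝ) + ⟪dtil - q, p - q⟫ = ⟪d - dtil, q - p⟫ + ‖q - p‖ ^ 2 := by
    rw [← real_inner_self_eq_norm_sq]
    simp only [inner_sub_left, inner_sub_right]
    rw [real_inner_comm p q]
    ring
  -- Cauchy–Schwarz bounds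
  have cs1 : (⟪d - p, w⟫ : ℝ) ≤ ‖d - p‖ * ‖w‖ := real_inner_le_norm _ _
  have cs2 : (⟪dtil - q, w⟫ : ℝ) ≤ ‖dtil - q‖ * ‖w‖ := real_inner_le_norm _ _
  have cs3 : |(⟪d - dtil, q - p⟫ : ℝ)| ≤ ‖d - dtil‖ * ‖q - p‖ := abs_real_inner_le_norm _ _
  have cs3' : -(‖d - dtil‖ * ‖q - p‖) ≤ (⟪d - dtil, q - p⟫ : ℝ) := (abs_le.mp cs3).1
  have hqp : ‖q - p‖ = ‖p - q‖ := norm_sub_rev _ _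
  -- key quadratic inequality
  have hdpnn : (0:ℝ) ≤ ‖d - p‖ := norm_nonneg _
  have hdqnn : (0:ℝ) ≤ ‖dtil - q‖ := norm_nonneg _
  have hpqnn : (0:ℝ) ≤ ‖p - q‖ := norm_nonneg _
  have hddnn : (0:ℝ) ≤ ‖d - dtil‖ := norm_nonneg _
  have key : ‖p - q‖ ^ 2 ≤ δ₂ * ‖p - q‖ + δ₂ * Kc := by
    rw [e1] at h1
    rw [e2] at h2
    have hsum : (⟪d - dtil, q - p⟫ : ℝ) + ‖q - p‖ ^ 2
        ≤ δ₂ * ⟪d - p, w⟫ + δ₂ * ⟪dtil - q, w⟫ := by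
      rw [← e3]; linarith
    have hip : (⟪d - p, w⟫ : ℝ) + ⟪dtil - q, w⟫ ≤ Kc := by
      have c1 : (⟪d - p, w⟫ : ℝ) + ⟪dtil - q, w⟫ ≤ (‖d - p‖ + ‖dtil - q‖) * ‖w‖ := by
        calc (⟪d - p, w⟫ : ℝ) + ⟪dtil - q, w⟫ ≤ ‖d - p‖ * ‖w‖ + ‖dtil - q‖ * ‖w‖ :=
              add_le_add cs1 cs2
          _ = (‖d - p‖ + ‖dtil - q‖) * ‖w‖ := by ring
      have c2 : (‖d - p‖ + ‖dtil - q‖) * ‖w‖ ≤ (2 * M + 1 + ‖w‖) * ‖w‖ :=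
        mul_le_mul_of_nonneg_right (by linarith) hw0
      rw [hKc]
      calc (⟪d - p, w⟫ : ℝ) + ⟪dtil - q, w⟫ ≤ (2 * M + 1 + ‖w‖) * ‖w‖ := le_trans c1 c2
        _ = ‖w‖ * (2 * M + 1 + ‖w‖) := mul_comm _ _
    have hbound : δ₂ * (⟪d - p, w⟫ : ℝ) + δ₂ * ⟪dtil - q, w⟫ ≤ δ₂ * Kc := by
      have h5 : δ₂ * ((⟪d - p, w⟫ : ℝ) + ⟪dtil - q, w⟫) ≤ δ₂ * Kc :=
        mul_le_mul_of_nonneg_left hip hδ₂pos.le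
      have h5' : δ₂ * (⟪d - p, w⟫ : ℝ) + δ₂ * ⟪dtil - q, w⟫
          = δ₂ * ((⟪d - p, w⟫ : ℝ) + ⟪dtil - q, w⟫) := by ring
      rw [h5']
      exact h5
    have h6 : ‖d - dtil‖ * ‖q - p‖ ≤ δ₂ * ‖q - p‖ :=
      mul_le_mul_of_nonneg_right hd (norm_nonneg _)
    rw [← hqp]
    linarith
  -- conclude
  by_contra hcon
  push_neg at hcon
  have hK1 : δ₂ * Kc ≤ δ₃ ^ 2 / 4 := by
    have : δ₂ * (Kc + 1) ≤ δ₃ ^ 2 / 4 := by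
      have h4 : (0:ℝ) < 4 * (Kc + 1) := by positivity
      calc δ₂ * (Kc + 1) ≤ (δ₃ ^ 2 / (4 * (Kc + 1))) * (Kc + 1) := by
            apply mul_le_mul_of_nonneg_right hδ₂quad (by linarith)
        _ = δ₃ ^ 2 / 4 := by field_simp
    nlinarith
  have ht : 0 < ‖p - q‖ := lt_trans hδ₃ hcon
  have h7 : δ₂ * ‖p - q‖ ≤ (δ₃ / 2) * ‖p - q‖ :=
    mul_le_mul_of_nonneg_right hδ₂half hpqnn
  have h8 : δ₃ * ‖p - q‖ < ‖p - q‖ * ‖p - q‖ := mul_lt_mul_of_pos_right hcon ht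
  have h9 : δ₃ * δ₃ < δ₃ * ‖p - q‖ := mul_lt_mul_of_pos_left hcon hδ₃
  nlinarith [key, h7, h8, h9]
end
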